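/- Let p be a prime, k a field of characteristic p, γ ∈ k a root of unity of order q, and g(ζ) = γζ + ... a power series in k[[ζ]]. Then for every integer n ≥ 0, i_n(g^q) := ord((g^{q p^n}(ζ) − ζ)/ζ) satisfies i_n(g^q) ≥ q·(p^{n+1} − 1)/(p − 1). -/

import Mathlib

open PowerSeries

/-- Formal composition `f ∘ g` of power series (correct when `g` has zero constant term). -/
noncomputable def fcomp {k : Type*} [CommRing k] (f g : PowerSeries k) : PowerSeries k :=
  PowerSeries.mk fun n =>
    ∑ m ∈ Finset.range (n + 1), (PowerSeries.coeff m f) * (PowerSeries.coeff n (g ^ m))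

/-- `m`-th iterate of a power series with zero constant term. -/
noncomputable def fit {k : Type*} [CommRing k] (g : PowerSeries k) : ℕ → PowerSeries k
  | 0 => PowerSeries.X
  | n + 1 => fcomp g (fit g n)

/-!
Write `F = g^{∘ q p^n} = X + u` with `u = c X^(m+1) + O(X^(m+2))`, `c ≠ 0`, so `m = i_n`.
Since `F` commutes with `g`, comparing the coefficients of `X^(m+1)` in `g ∘ F` and `F ∘ g`
gives `γ c = γ^(m+1) c`, so `q ∣ m`. Let `Δ w = w ∘ F - w`. In characteristic `p`,
`(Δ + 1)^p = Δ^p + 1`, hence `F^{∘p} - X = Δ^p X = Δ^(p-1) u`; each `Δ` raises the order of a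
series of order `s` by `m` and multiplies its leading coefficient by `s c`. So
`i_{n+1} ≥ p m`, strictly when `p ∤ m`, since then one of the factors `m + 1 + j m`
(`j < p - 1`) is divisible by `p`. As `q ∣ i_n` for all `n` and `p ∤ q(1 + p + ⋯ + p^n)`,
induction on `n` gives the bound.
-/

open Finset

section PowerSeries

variable {R : Type*} [CommRing R] {f g : R⟦X⟧}

theorem coeff_pow_eq_zero_of_lt (hg : constantCoeff g = 0) {n m : ℕ} (h : n < m) :
    coeff n (g ^ m) = 0 :=
  coeff_of_lt_order n <|
    (Nat.cast_lt.mpr h).trans_le (le_order_pow_of_constantCoeff_eq_zero m hg)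

theorem coeff_pow_self (hg : constantCoeff g = 0) (n : ℕ) : coeff n (g ^ n) = coeff 1 g ^ n := by
  obtain ⟨g', rfl⟩ := X_dvd_iff.mpr hg
  rw [mul_pow, coeff_X_pow_mul', if_pos le_rfl, Nat.sub_self, coeff_zero_eq_constantCoeff,
    map_pow, coeff_succ_X_mul, coeff_zero_eq_constantCoeff]

theorem X_pow_succ_dvd_of_coeff_eq_zero {n : ℕ} (hf : X ^ n ∣ f) (hn : coeff n f = 0) :
    X ^ (n + 1) ∣ f :=
  X_pow_dvd_iff.mpr fun m hm =>
    (Nat.lt_succ_iff_lt_or_eq.mp hm).elim (X_pow_dvd_iff.mp hf m) (· ▸ hn)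

theorem order_eq_nat_iff_X_pow_dvd {n : ℕ} : order f = n ↔ X ^ n ∣ f ∧ coeff n f ≠ 0 := by
  rw [order_eq_nat, X_pow_dvd_iff, and_comm]

theorem exists_order_eq_succ (hf : f ≠ 0) (h0 : constantCoeff f = 0) :
    ∃ m : ℕ, order f = (m + 1 : ℕ) := by
  obtain ⟨n, hn⟩ := ENat.ne_top_iff_exists.mp (order_eq_top.not.mpr hf)
  have hn0 : n ≠ 0 := by
    rintro rfl
    exact order_ne_zero_iff_constCoeff_eq_zero.mpr h0 hn.symm
  exact ⟨n - 1, by rw [Nat.sub_add_cancel (Nat.pos_of_ne_zero hn0), hn]⟩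

end PowerSeries

section Arithmetic

theorem Nat.exists_dvd_add_one_add_mul {p i : ℕ} (hp : p.Prime) (hi : ¬ p ∣ i) :
    ∃ j < p - 1, p ∣ i + 1 + j * i := by
  have := Fact.mk hp
  have hi' : (i : ZMod p) ≠ 0 := by rwa [Ne, ZMod.natCast_eq_zero_iff]
  set a := (-(i : ZMod p)⁻¹).val with ha
  have ha0 : a ≠ 0 := by simpa [ha, ZMod.val_eq_zero] using hi'
  have hap : a < p := ZMod.val_lt _
  refine ⟨a - 1, by omega, ?_⟩
  rw [← ZMod.natCast_eq_zero_iff, show i + 1 + (a - 1) * i = a * i + 1 by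
    rw [Nat.sub_one_mul]; have := Nat.le_mul_of_pos_left i (Nat.pos_of_ne_zero ha0); omega]
  push_cast
  rw [ha, ZMod.natCast_zmod_val, neg_mul, inv_mul_cancel₀ hi', neg_add_cancel]

theorem Nat.not_dvd_geom_sum {p : ℕ} (hp : p.Prime) (n : ℕ) :
    ¬ p ∣ ∑ j ∈ range (n + 1), p ^ j := by
  rw [geom_sum_succ, Nat.dvd_add_right (dvd_mul_right p _)]
  exact hp.not_dvd_one

-- If `m = q S` exactly, then `p ∤ m` and the strict inequality supplies the extra `q`.
theorem Nat.mul_geom_step_le {p q S m i : ℕ} (hp : p.Prime) (hpq : ¬ p ∣ q) (hS : ¬ p ∣ S)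
    (hm : q ∣ m) (hi : q ∣ i) (hSm : q * S ≤ m) (hmi : p * m ≤ i)
    (hstrict : ¬ p ∣ m → p * m < i) : q * (p * S + 1) ≤ i := by
  by_cases hpm : p ∣ m
  · have hSm' : q * (S + 1) ≤ m := by
      obtain ⟨m', rfl⟩ := hm
      have hne : m' ≠ S := by
        rintro rfl
        exact (hp.dvd_mul.mp hpm).elim hpq hS
      have hq : 0 < q := Nat.pos_of_ne_zero (by rintro rfl; exact hpq (dvd_zero p))
      have := Nat.le_of_mul_le_mul_left hSm hq
      exact Nat.mul_le_mul_left q (by omega)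
    nlinarith [hp.two_le]
  · obtain ⟨i', rfl⟩ := hi
    obtain ⟨m', rfl⟩ := hm
    have hlt : p * m' < i' := by nlinarith [hstrict hpm]
    nlinarith

theorem not_dvd_orderOf_of_charP {R : Type*} [CommRing R] [IsReduced R] {p : ℕ} [Fact p.Prime]
    [CharP R p] {x : R} (hx : 0 < orderOf x) : ¬ p ∣ orderOf x := by
  rintro ⟨t, ht⟩
  have ht0 : 0 < t := Nat.pos_of_mul_pos_left (ht ▸ hx)
  have hxt : x ^ t = 1 := frobenius_inj R p <| by
    rw [frobenius_def, frobenius_def, one_pow, ← pow_mul, mul_comm, ← ht, pow_orderOf_eq_one]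
  have := orderOf_le_of_pow_eq_one ht0 hxt
  rw [ht] at this
  nlinarith [(Fact.out : p.Prime).two_le]

end Arithmetic

section Composition

variable {R : Type*} [CommRing R] {f g h : R⟦X⟧}

theorem fcomp_eq_subst (f : R⟦X⟧) (hg : constantCoeff g = 0) : fcomp f g = f.subst g := by
  ext n
  rw [coeff_subst' (HasSubst.of_constantCoeff_zero' hg),
    finsum_eq_sum_of_support_subset _ (s := range (n + 1))]
  · simp [fcomp]
  · intro m hm
    by_contra hmn
    simp only [coe_range, Set.mem_Iio, not_lt] at hmn
    exact hm (show coeff m f • coeff n (g ^ m) = 0 by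
      rw [coeff_pow_eq_zero_of_lt hg (by omega), smul_zero])

theorem constantCoeff_fcomp (f g : R⟦X⟧) : constantCoeff (fcomp f g) = constantCoeff f := by
  rw [← coeff_zero_eq_constantCoeff_apply, fcomp, coeff_mk]
  simp

theorem coeff_one_fcomp (f g : R⟦X⟧) : coeff 1 (fcomp f g) = coeff 1 f * coeff 1 g := by
  simp [fcomp, sum_range_succ]

theorem fcomp_X_right (f : R⟦X⟧) : fcomp f X = f := by
  rw [fcomp_eq_subst f constantCoeff_X, X_subst]

theorem fcomp_X_left (hg : constantCoeff g = 0) : fcomp X g = g := by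
  rw [fcomp_eq_subst X hg, subst_X (HasSubst.of_constantCoeff_zero' hg)]

theorem fcomp_add (f₁ f₂ g : R⟦X⟧) : fcomp (f₁ + f₂) g = fcomp f₁ g + fcomp f₂ g := by
  ext n
  simp [fcomp, add_mul, sum_add_distrib]

theorem fcomp_assoc (f : R⟦X⟧) (hg : constantCoeff g = 0) (hh : constantCoeff h = 0) :
    fcomp (fcomp f g) h = fcomp f (fcomp g h) := by
  have hgh : constantCoeff (fcomp g h) = 0 := by rwa [constantCoeff_fcomp]
  rw [fcomp_eq_subst _ hh, fcomp_eq_subst f hgh, fcomp_eq_subst f hg, fcomp_eq_subst g hh,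
    subst_comp_subst_apply (HasSubst.of_constantCoeff_zero' hg)
      (HasSubst.of_constantCoeff_zero' hh)]

theorem coeff_fcomp_of_X_pow_dvd (hg : constantCoeff g = 0) {s : ℕ} (hf : X ^ s ∣ f) :
    coeff s (fcomp f g) = coeff s f * coeff 1 g ^ s := by
  rw [fcomp, coeff_mk, sum_eq_single s, coeff_pow_self hg]
  · intro m hm hms
    rcases lt_or_gt_of_ne hms with hlt | hgt
    · rw [X_pow_dvd_iff.mp hf m hlt, zero_mul]
    · rw [mem_range] at hm
      omega
  · simp

theorem coeff_fcomp_sub_self (f g : R⟦X⟧) (n : ℕ) :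
    coeff n (fcomp f g - f) = ∑ m ∈ range (n + 1), coeff m f * coeff n (g ^ m - X ^ m) := by
  simp [fcomp, mul_sub, sum_sub_distrib, coeff_X_pow]

end Composition

section Iterate

variable {R : Type*} [CommRing R] {g : R⟦X⟧}

theorem constantCoeff_fit (hg : constantCoeff g = 0) (n : ℕ) : constantCoeff (fit g n) = 0 := by
  induction n with
  | zero => exact constantCoeff_X
  | succ n _ => rw [fit, constantCoeff_fcomp, hg]

theorem coeff_one_fit (g : R⟦X⟧) (n : ℕ) : coeff 1 (fit g n) = coeff 1 g ^ n := by
  induction n with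
  | zero => simp [fit]
  | succ n ih => rw [fit, coeff_one_fcomp, ih, pow_succ']

theorem fit_X (n : ℕ) : fit (X : R⟦X⟧) n = X := by
  induction n with
  | zero => rfl
  | succ n ih => rw [fit, ih, fcomp_X_left constantCoeff_X]

theorem fit_add (hg : constantCoeff g = 0) (m n : ℕ) :
    fit g (m + n) = fcomp (fit g m) (fit g n) := by
  induction m with
  | zero => rw [zero_add, fit, fcomp_X_left (constantCoeff_fit hg n)]
  | succ m ih =>
    rw [Nat.add_right_comm, fit, ih, fit,
      fcomp_assoc g (constantCoeff_fit hg m) (constantCoeff_fit hg n)]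

theorem fit_mul (hg : constantCoeff g = 0) (m n : ℕ) : fit g (m * n) = fit (fit g m) n := by
  induction n with
  | zero => rfl
  | succ n ih => rw [Nat.mul_succ, add_comm, fit_add hg, ih, fit]

theorem fcomp_fit_comm (hg : constantCoeff g = 0) (n : ℕ) :
    fcomp g (fit g n) = fcomp (fit g n) g := by
  rw [← fit, fit_add hg n 1, fit, fit, fcomp_X_right]

end Iterate

section Precomposition

variable {R : Type*} [CommRing R]

noncomputable def precomp (F : R⟦X⟧) : Module.End R R⟦X⟧ where
  toFun w := fcomp w F
  map_add' a b := fcomp_add a b F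
  map_smul' c a := by
    ext n
    simp [fcomp, mul_sum, mul_assoc]

theorem precomp_apply (F w : R⟦X⟧) : precomp F w = fcomp w F := rfl

theorem precomp_pow_apply {F : R⟦X⟧} (hF : constantCoeff F = 0) (j : ℕ) (w : R⟦X⟧) :
    (precomp F ^ j) w = fcomp w (fit F j) := by
  induction j generalizing w with
  | zero => exact (fcomp_X_right w).symm
  | succ j ih =>
    rw [pow_succ, Module.End.mul_apply, ih, precomp_apply, fit,
      fcomp_assoc w hF (constantCoeff_fit hF j)]

theorem charP_moduleEnd_powerSeries (p : ℕ) [CharP R p] : CharP (Module.End R R⟦X⟧) p :=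
  charP_of_injective_algebraMap (R := R) (fun a b hab => by
    simpa [Algebra.algebraMap_eq_smul_one] using congr(constantCoeff ($hab 1))) p

-- `(T - 1)^p = T^p - 1` for `T = precomp F`, and `(T - 1) X = F - X`.
theorem fit_sub_X_eq_precomp_sub_one_pow {p : ℕ} [Fact p.Prime] [CharP R p] {F : R⟦X⟧}
    (hF : constantCoeff F = 0) :
    fit F p - X = ((precomp F - 1) ^ (p - 1)) (F - X) := by
  have := charP_moduleEnd_powerSeries (R := R) p
  have hΔ : (precomp F - 1) X = F - X := by
    rw [LinearMap.sub_apply, precomp_apply, fcomp_X_left hF, Module.End.one_apply]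
  rw [← hΔ, ← Module.End.mul_apply, ← pow_succ, Nat.sub_add_cancel (Fact.out : p.Prime).pos,
    sub_pow_char_of_commute _ (Commute.one_right _), one_pow, LinearMap.sub_apply,
    precomp_pow_apply hF, fcomp_X_left (constantCoeff_fit hF p), Module.End.one_apply]

end Precomposition

section Difference

variable {R : Type*} [CommRing R]

theorem exists_add_pow_sub_pow_eq (x v : R) (i m : ℕ) :
    ∃ w, (x + x ^ (i + 1) * v) ^ m - x ^ m = x ^ (m + i) * (m * v + x ^ i * w) := by
  obtain ⟨w, hw⟩ := sq_dvd_add_pow_sub_sub (x ^ i * v) 1 m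
  refine ⟨v ^ 2 * w, ?_⟩
  simp only [one_pow, one_mul] at hw
  rw [show x + x ^ (i + 1) * v = x * (1 + x ^ i * v) by ring, mul_pow]
  linear_combination x ^ m * hw

variable {u h : R⟦X⟧} {i s : ℕ}

theorem X_pow_dvd_X_add_pow_sub_pow (hu : X ^ (i + 1) ∣ u) (m : ℕ) :
    X ^ (m + i) ∣ (X + u) ^ m - X ^ m := by
  obtain ⟨v, rfl⟩ := hu
  obtain ⟨w, hw⟩ := exists_add_pow_sub_pow_eq X v i m
  exact hw ▸ dvd_mul_right _ _

theorem coeff_X_add_pow_sub_pow (hi : 1 ≤ i) (hu : X ^ (i + 1) ∣ u) (m : ℕ) :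
    coeff (m + i) ((X + u) ^ m - X ^ m) = m * coeff (i + 1) u := by
  obtain ⟨v, rfl⟩ := hu
  obtain ⟨w, hw⟩ := exists_add_pow_sub_pow_eq X v i m
  rw [hw, coeff_X_pow_mul', if_pos le_rfl, Nat.sub_self, coeff_X_pow_mul', if_pos le_rfl,
    Nat.sub_self, map_add, coeff_X_pow_mul', if_neg (by omega), add_zero]
  simp

theorem X_pow_dvd_fcomp_X_add_sub (hu : X ^ (i + 1) ∣ u) (hh : X ^ s ∣ h) :
    X ^ (s + i) ∣ fcomp h (X + u) - h := by
  refine X_pow_dvd_iff.mpr fun n hn => ?_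
  rw [coeff_fcomp_sub_self]
  refine sum_eq_zero fun m _ => ?_
  rcases lt_or_ge m s with hms | hms
  · rw [X_pow_dvd_iff.mp hh m hms, zero_mul]
  · rw [X_pow_dvd_iff.mp (X_pow_dvd_X_add_pow_sub_pow hu m) n (by omega), mul_zero]

theorem coeff_fcomp_X_add_sub (hi : 1 ≤ i) (hu : X ^ (i + 1) ∣ u) (hh : X ^ s ∣ h) :
    coeff (s + i) (fcomp h (X + u) - h) = s * coeff s h * coeff (i + 1) u := by
  rw [coeff_fcomp_sub_self, sum_eq_single s, coeff_X_add_pow_sub_pow hi hu, mul_left_comm,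
    mul_assoc]
  · intro m _ hms
    rcases lt_or_gt_of_ne hms with hlt | hgt
    · rw [X_pow_dvd_iff.mp hh m hlt, zero_mul]
    · rw [X_pow_dvd_iff.mp (X_pow_dvd_X_add_pow_sub_pow hu m) _ (by omega), mul_zero]
  · simp

theorem X_pow_dvd_and_coeff_precomp_sub_one_pow (hi : 1 ≤ i) (hu : X ^ (i + 1) ∣ u) (r : ℕ) :
    X ^ (i + 1 + r * i) ∣ ((precomp (X + u) - 1 : Module.End R R⟦X⟧) ^ r) u ∧
      coeff (i + 1 + r * i) (((precomp (X + u) - 1 : Module.End R R⟦X⟧) ^ r) u) =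
        (∏ j ∈ range r, ((i + 1 + j * i : ℕ) : R)) * coeff (i + 1) u ^ (r + 1) := by
  induction r with
  | zero => simpa using hu
  | succ r ih =>
    have hstep : i + 1 + (r + 1) * i = i + 1 + r * i + i := by ring
    rw [pow_succ', Module.End.mul_apply, LinearMap.sub_apply, precomp_apply,
      Module.End.one_apply, hstep, coeff_fcomp_X_add_sub hi hu ih.1, ih.2, prod_range_succ]
    refine ⟨X_pow_dvd_fcomp_X_add_sub hu ih.1, ?_⟩
    push_cast
    ring

end Difference

section PrimeIterate

variable {R : Type*} [CommRing R]

theorem X_pow_dvd_fit_prime_sub_X {p : ℕ} (hp : p.Prime) [CharP R p] {F : R⟦X⟧} {i : ℕ}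
    (hi : 1 ≤ i) (hF : X ^ (i + 1) ∣ F - X) :
    X ^ (p * i + 1) ∣ fit F p - X ∧ (¬ p ∣ i → X ^ (p * i + 2) ∣ fit F p - X) := by
  have := Fact.mk hp
  have hF0 : constantCoeff F = 0 := by
    simpa using X_pow_dvd_iff.mp hF 0 (Nat.succ_pos i)
  obtain ⟨hdvd, hcoeff⟩ := X_pow_dvd_and_coeff_precomp_sub_one_pow hi hF (p - 1)
  have hidx : i + 1 + (p - 1) * i = p * i + 1 := by
    rw [Nat.sub_one_mul]; have := Nat.le_mul_of_pos_left i hp.pos; omega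
  rw [add_sub_cancel, ← fit_sub_X_eq_precomp_sub_one_pow hF0, hidx] at hdvd hcoeff
  refine ⟨hdvd, fun hpi => X_pow_succ_dvd_of_coeff_eq_zero hdvd ?_⟩
  obtain ⟨j, hj, hpj⟩ := Nat.exists_dvd_add_one_add_mul hp hpi
  rw [hcoeff, prod_eq_zero (mem_range.mpr hj)
    ((CharP.cast_eq_zero_iff R p (i + 1 + j * i)).mpr hpj), zero_mul]

theorem le_of_order_fit_prime_sub_X {p : ℕ} (hp : p.Prime) [CharP R p] {F : R⟦X⟧} {m i : ℕ}
    (hm : 1 ≤ m) (hF : order (F - X) = (m + 1 : ℕ)) (hG : order (fit F p - X) = (i + 1 : ℕ)) :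
    p * m ≤ i ∧ (¬ p ∣ m → p * m < i) := by
  obtain ⟨hFdvd, -⟩ := order_eq_nat_iff_X_pow_dvd.mp hF
  obtain ⟨-, hne⟩ := order_eq_nat_iff_X_pow_dvd.mp hG
  obtain ⟨hdvd, hdvd'⟩ := X_pow_dvd_fit_prime_sub_X hp hm hFdvd
  have hle : ∀ n, X ^ n ∣ fit F p - X → n ≤ i + 1 := fun n hn =>
    not_lt.mp fun hlt => hne (X_pow_dvd_iff.mp hn _ hlt)
  exact ⟨by have := hle _ hdvd; omega, fun hpm => by have := hle _ (hdvd' hpm); omega⟩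

theorem exists_order_sub_X_eq_succ {F : R⟦X⟧} (hF : constantCoeff F = 0) {N i : ℕ}
    (h : order (fit F N - X) = (i + 1 : ℕ)) : ∃ m : ℕ, order (F - X) = (m + 1 : ℕ) := by
  refine exists_order_eq_succ (fun hFX => ?_) (by simp [hF])
  rw [sub_eq_zero.mp hFX, fit_X, sub_self, order_zero] at h
  exact ENat.top_ne_natCast _ h

-- Compare the coefficients of `X^(i+1)` in `g ∘ F = g + Δ g` and `F ∘ g = g + (F - X) ∘ g`.
theorem coeff_sub_X_mul_coeff_one_pow {g F : R⟦X⟧} {i : ℕ} (hg : constantCoeff g = 0)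
    (hcomm : fcomp g F = fcomp F g) (hi : 1 ≤ i) (hF : X ^ (i + 1) ∣ F - X) :
    coeff (i + 1) (F - X) * coeff 1 g ^ (i + 1) = coeff (i + 1) (F - X) * coeff 1 g := by
  have hright : coeff (i + 1) (fcomp F g) =
      coeff (i + 1) g + coeff (i + 1) (F - X) * coeff 1 g ^ (i + 1) := by
    rw [← add_sub_cancel X F, fcomp_add, fcomp_X_left hg, map_add, add_sub_cancel_left,
      coeff_fcomp_of_X_pow_dvd hg hF]
  have hleft : coeff (i + 1) (fcomp g F) - coeff (i + 1) g =
      1 * coeff 1 g * coeff (i + 1) (F - X) := by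
    have := coeff_fcomp_X_add_sub hi hF (s := 1) (by simpa [X_dvd_iff] using hg)
    rwa [add_sub_cancel, add_comm, map_sub, Nat.cast_one] at this
  rw [hcomm, hright] at hleft
  linear_combination hleft

variable [IsDomain R]

theorem coeff_one_pow_eq_one_of_fcomp_comm {g F : R⟦X⟧} {i : ℕ} (hg : constantCoeff g = 0)
    (hγ : coeff 1 g ≠ 0) (hcomm : fcomp g F = fcomp F g) (hi : 1 ≤ i)
    (hF : X ^ (i + 1) ∣ F - X) (hne : coeff (i + 1) (F - X) ≠ 0) : coeff 1 g ^ i = 1 := by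
  have := mul_left_cancel₀ hne (coeff_sub_X_mul_coeff_one_pow hg hcomm hi hF)
  rw [pow_succ] at this
  exact mul_right_cancel₀ hγ (this.trans (one_mul _).symm)

theorem one_le_and_orderOf_dvd_of_order_fit_sub_X {g : R⟦X⟧} (hg : constantCoeff g = 0)
    (hγ : coeff 1 g ≠ 0) {N i : ℕ} (hN : coeff 1 g ^ N = 1)
    (h : order (fit g N - X) = (i + 1 : ℕ)) : 1 ≤ i ∧ orderOf (coeff 1 g) ∣ i := by
  obtain ⟨hdvd, hne⟩ := order_eq_nat_iff_X_pow_dvd.mp h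
  have hi : 1 ≤ i := by
    by_contra! hi0
    obtain rfl : i = 0 := by omega
    exact hne (by simp [coeff_one_fit, hN])
  exact ⟨hi, orderOf_dvd_of_pow_eq_one <|
    coeff_one_pow_eq_one_of_fcomp_comm hg hγ (fcomp_fit_comm hg N) hi hdvd hne⟩

end PrimeIterate

/-- For every `n ≥ 0`, `i_n(g^q) = ord((g^{q p^n}(ζ) - ζ)/ζ) ≥ q·(p^{n+1} - 1)/(p - 1)
= q·(1 + p + ⋯ + p^n)` (the infinite case being trivial). -/
theorem stmt10 {k : Type*} [Field k] (p : ℕ) (hp : p.Prime) [CharP k p]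
    (γ : k) (q : ℕ) (hq0 : 0 < q) (hγq : γ ^ q = 1)
    (hqmin : ∀ j, 0 < j → j < q → γ ^ j ≠ 1)
    (g : PowerSeries k) (hg0 : PowerSeries.constantCoeff g = 0)
    (hg1 : PowerSeries.coeff 1 g = γ)
    (n : ℕ) (i : ℕ)
    (hi : PowerSeries.order (fit g (q * p ^ n) - PowerSeries.X) = ((i + 1 : ℕ) : ℕ∞)) :
    q * ∑ j ∈ Finset.range (n + 1), p ^ j ≤ i := by
  have := Fact.mk hp
  subst hg1
  have hγ0 : coeff 1 g ≠ 0 := by rintro h; simp [h, zero_pow hq0.ne'] at hγq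
  have hq : orderOf (coeff 1 g) = q :=
    (orderOf_eq_iff hq0).mpr ⟨hγq, fun j hjq hj0 => hqmin j hj0 hjq⟩
  have hpq : ¬ p ∣ q := hq ▸ not_dvd_orderOf_of_charP (hq ▸ hq0)
  have hindex : ∀ n {i : ℕ}, order (fit g (q * p ^ n) - X) = (i + 1 : ℕ) → 1 ≤ i ∧ q ∣ i :=
    fun n i h => hq ▸ one_le_and_orderOf_dvd_of_order_fit_sub_X hg0 hγ0
      (by rw [pow_mul, hγq, one_pow]) h
  induction n generalizing i with
  | zero =>
    obtain ⟨hi1, hqi⟩ := hindex 0 hi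
    simpa using Nat.le_of_dvd hi1 hqi
  | succ n ih =>
    have hG : fit g (q * p ^ (n + 1)) = fit (fit g (q * p ^ n)) p := by
      rw [pow_succ, ← mul_assoc, fit_mul hg0]
    obtain ⟨m, hm⟩ := exists_order_sub_X_eq_succ (constantCoeff_fit hg0 _) (hG ▸ hi)
    obtain ⟨hpm, hstrict⟩ := le_of_order_fit_prime_sub_X hp (hindex n hm).1 hm (hG ▸ hi)
    rw [geom_sum_succ]
    exact Nat.mul_geom_step_le hp hpq (Nat.not_dvd_geom_sum hp n) (hindex n hm).2
      (hindex (n + 1) hi).2 (ih m hm) hpm hstrict
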